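/- arXiv:2002.10923 — 8 statements merged into one kernel-verified Lean document; each statement's English description precedes it below -/
import Mathlib

section
/- Let x_1, ..., x_n be vectors in R^m, let l : R -> R be a surrogate function (convex, nonnegative, nondecreasing, with l(0) = 1), let beta > 0 and tau in R, and define g(w, t) = (1/n) * sum_{i=1}^n l(beta * (<w, x_i> - t)) - tau. Suppose tbar : R^m -> R satisfies g(w, tbar(w)) = 0 for every w, and moreover for every w and every s in R, g(w, s) <= 0 implies tbar(w) <= s (i.e., tbar(w) is the smallest root). Then tbar is a convex function on R^m. -/
open scoped InnerProductSpace

/-- the surrogate top `τ`-quantile, defined implicitly as the smallest root of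
`g(w, ·)`, is a convex function of the weights `w`. -/
theorem surrogate_quantile_convex {m n : ℕ}
    (x : Fin n → EuclideanSpace ℝ (Fin m))
    (l : ℝ → ℝ) (hl_conv : ConvexOn ℝ Set.univ l) (hl_nonneg : ∀ z, 0 ≤ l z)
    (hl_mono : Monotone l) (hl_zero : l 0 = 1)
    (β τ : ℝ) (hβ : 0 < β)
    (g : EuclideanSpace ℝ (Fin m) → ℝ → ℝ)
    (hg : ∀ w t, g w t = (1 / (n : ℝ)) * ∑ i, l (β * (⟪w, x i⟫_ℝ - t)) - τ)
    (tbar : EuclideanSpace ℝ (Fin m) → ℝ)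
    (hroot : ∀ w, g w (tbar w) = 0)
    (hmin : ∀ w s, g w s ≤ 0 → tbar w ≤ s) :
    ConvexOn ℝ Set.univ tbar := by
  refine ⟨convex_univ, fun w₁ _ w₂ _ a b ha hb hab => ?_⟩
  simp only [smul_eq_mul]
  apply hmin
  rw [hg]
  have key : ∀ i : Fin n, l (β * (⟪a • w₁ + b • w₂, x i⟫_ℝ - (a * tbar w₁ + b * tbar w₂)))
      ≤ a * l (β * (⟪w₁, x i⟫_ℝ - tbar w₁)) + b * l (β * (⟪w₂, x i⟫_ℝ - tbar w₂)) := by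
    intro i
    have h1 : β * (⟪a • w₁ + b • w₂, x i⟫_ℝ - (a * tbar w₁ + b * tbar w₂))
        = a * (β * (⟪w₁, x i⟫_ℝ - tbar w₁)) + b * (β * (⟪w₂, x i⟫_ℝ - tbar w₂)) := by
      rw [inner_add_left, real_inner_smul_left, real_inner_smul_left]; ring
    rw [h1]
    have := hl_conv.2 (Set.mem_univ (β * (⟪w₁, x i⟫_ℝ - tbar w₁)))
      (Set.mem_univ (β * (⟪w₂, x i⟫_ℝ - tbar w₂))) ha hb hab
    simpa using this
  have hsum : ∑ i, l (β * (⟪a • w₁ + b • w₂, x i⟫_ℝ - (a * tbar w₁ + b * tbar w₂)))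
      ≤ a * ∑ i, l (β * (⟪w₁, x i⟫_ℝ - tbar w₁))
        + b * ∑ i, l (β * (⟪w₂, x i⟫_ℝ - tbar w₂)) := by
    rw [Finset.mul_sum, Finset.mul_sum, ← Finset.sum_add_distrib]
    exact Finset.sum_le_sum fun i _ => key i
  have hn : (0:ℝ) ≤ 1 / (n : ℝ) := by positivity
  have h1 := hroot w₁
  have h2 := hroot w₂
  rw [hg] at h1 h2
  have h3 := mul_le_mul_of_nonneg_left hsum hn
  have hS1 : 1 / (n:ℝ) * ∑ i, l (β * (⟪w₁, x i⟫_ℝ - tbar w₁)) = τ := by linarith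
  have hS2 : 1 / (n:ℝ) * ∑ i, l (β * (⟪w₂, x i⟫_ℝ - tbar w₂)) = τ := by linarith
  have h4 : 1 / (n:ℝ) * (a * ∑ i, l (β * (⟪w₁, x i⟫_ℝ - tbar w₁))
      + b * ∑ i, l (β * (⟪w₂, x i⟫_ℝ - tbar w₂)))
      = a * (1 / (n:ℝ) * ∑ i, l (β * (⟪w₁, x i⟫_ℝ - tbar w₁)))
      + b * (1 / (n:ℝ) * ∑ i, l (β * (⟪w₂, x i⟫_ℝ - tbar w₂))) := by ring
  rw [hS1, hS2] at h4
  have h5 : a * τ + b * τ = τ := by rw [← add_mul, hab, one_mul]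
  linarith
end

section
/- Let x_1, ..., x_p be vectors in R^m (the positive samples), let l : R -> R be a surrogate function (convex, nonnegative, nondecreasing, with l(0) = 1) that is differentiable at 0, and let lambda >= 0. For any w in R^m and t in R satisfying t >= (1/p) * sum_{i=1}^p <w, x_i>, we have (1/p) * sum_{i=1}^p l(t - <w, x_i>) + (lambda/2) * ||w||^2 >= 1. Consequently, since the objective value at w = 0 with threshold t = 0 equals l(0) = 1, any threshold rule t(w) with t(0) = 0 satisfies f(0) <= f(w) whenever t(w) >= (1/p) * sum_{i=1}^p <w, x_i>, where f(w) = (1/p) * sum_{i=1}^p l(t(w) - <w, x_i>) + (lambda/2) * ||w||^2. -/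
open scoped InnerProductSpace

/-- if the threshold is at least the mean positive score, the regularized
surrogate false-negative objective is at least `1`; consequently, for any threshold rule
with `t(0) = 0`, the objective at `w = 0` is no larger than at such `w`. -/
theorem objective_ge_one_of_large_threshold {m p : ℕ}
    (x : Fin p → EuclideanSpace ℝ (Fin m))
    (l : ℝ → ℝ) (hl_conv : ConvexOn ℝ Set.univ l) (hl_nonneg : ∀ z, 0 ≤ l z)
    (hl_mono : Monotone l) (hl_zero : l 0 = 1) (hl_diff : DifferentiableAt ℝ l 0)
    (lam : ℝ) (hlam : 0 ≤ lam) (hp : 0 < p) :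
    (∀ (w : EuclideanSpace ℝ (Fin m)) (t : ℝ),
      (1 / (p : ℝ)) * ∑ i, ⟪w, x i⟫_ℝ ≤ t →
        1 ≤ (1 / (p : ℝ)) * ∑ i, l (t - ⟪w, x i⟫_ℝ) + lam / 2 * ‖w‖ ^ 2) ∧
    (∀ t : EuclideanSpace ℝ (Fin m) → ℝ, t 0 = 0 →
      ∀ w : EuclideanSpace ℝ (Fin m),
        (1 / (p : ℝ)) * ∑ i, ⟪w, x i⟫_ℝ ≤ t w →
          (1 / (p : ℝ)) * ∑ i, l (t 0 - ⟪(0 : EuclideanSpace ℝ (Fin m)), x i⟫_ℝ)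
              + lam / 2 * ‖(0 : EuclideanSpace ℝ (Fin m))‖ ^ 2 ≤
            (1 / (p : ℝ)) * ∑ i, l (t w - ⟪w, x i⟫_ℝ) + lam / 2 * ‖w‖ ^ 2) := by
  have hp' : (0 : ℝ) < p := by exact_mod_cast hp
  have main : ∀ (w : EuclideanSpace ℝ (Fin m)) (t : ℝ),
      (1 / (p : ℝ)) * ∑ i, ⟪w, x i⟫_ℝ ≤ t →
        1 ≤ (1 / (p : ℝ)) * ∑ i, l (t - ⟪w, x i⟫_ℝ) + lam / 2 * ‖w‖ ^ 2 := by
    intro w t ht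
    have hj := hl_conv.map_sum_le (t := Finset.univ) (w := fun _ : Fin p => 1 / (p : ℝ))
      (p := fun i => t - ⟪w, x i⟫_ℝ)
      (fun i _ => by positivity)
      (by simp [Finset.sum_const, Finset.card_univ]; field_simp)
      (fun i _ => Set.mem_univ _)
    have hmean : (0 : ℝ) ≤ ∑ i, (1 / (p : ℝ)) • (t - ⟪w, x i⟫_ℝ) := by
      have : ∑ i, (1 / (p : ℝ)) • (t - ⟪w, x i⟫_ℝ)
          = t - (1 / (p : ℝ)) * ∑ i, ⟪w, x i⟫_ℝ := by
        simp [smul_eq_mul, mul_sub, Finset.sum_sub_distrib, Finset.mul_sum,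
          Finset.sum_const, Finset.card_univ]
        field_simp
      rw [this]; linarith
    have h1 : (1 : ℝ) ≤ l (∑ i, (1 / (p : ℝ)) • (t - ⟪w, x i⟫_ℝ)) := by
      have := hl_mono hmean; rwa [hl_zero] at this
    have h2 : (1 : ℝ) ≤ ∑ i, (1 / (p : ℝ)) * l (t - ⟪w, x i⟫_ℝ) := le_trans h1 hj
    have h3 : ∑ i, (1 / (p : ℝ)) * l (t - ⟪w, x i⟫_ℝ)
        = (1 / (p : ℝ)) * ∑ i, l (t - ⟪w, x i⟫_ℝ) := by rw [Finset.mul_sum]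
    nlinarith [sq_nonneg ‖w‖, mul_nonneg hlam (sq_nonneg ‖w‖)]
  refine ⟨main, ?_⟩
  intro t ht0 w hw
  have hL : (1 / (p : ℝ)) * ∑ i, l (t 0 - ⟪(0 : EuclideanSpace ℝ (Fin m)), x i⟫_ℝ)
      + lam / 2 * ‖(0 : EuclideanSpace ℝ (Fin m))‖ ^ 2 = 1 := by
    simp [ht0, hl_zero, Finset.sum_const, Finset.card_univ]
    field_simp
  rw [hL]
  exact main w (t w) hw
end

section
/- Let x_1, ..., x_p be vectors in R^m (the positive samples) and y_1, ..., y_q vectors in R^m (the negative samples), let l : R -> R be a surrogate function (convex, nonnegative, nondecreasing, with l(0) = 1) that is differentiable at 0, and let lambda >= 0. Define the TopPush objective f(w) = (1/p) * sum_{i=1}^p l(max_{1<=j<=q} <w, y_j> - <w, x_i>) + (lambda/2) * ||w||^2. If every positive sample x_i lies in the convex hull of the negative samples {y_1, ..., y_q}, then f(0) <= f(w) for every w in R^m, i.e., w = 0 is a global minimizer of f. -/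
open scoped InnerProductSpace

/-- if the positive samples lie in the convex hull of the negative samples, then
`w = 0` is a global minimizer of the TopPush objective. -/
theorem toppush_zero_global_min {m p q : ℕ} (hq : 0 < q)
    (x : Fin p → EuclideanSpace ℝ (Fin m)) (y : Fin q → EuclideanSpace ℝ (Fin m))
    (l : ℝ → ℝ) (hl_conv : ConvexOn ℝ Set.univ l) (hl_nonneg : ∀ z, 0 ≤ l z)
    (hl_mono : Monotone l) (hl_zero : l 0 = 1) (hl_diff : DifferentiableAt ℝ l 0)
    (lam : ℝ) (hlam : 0 ≤ lam)
    (hhull : ∀ i, x i ∈ convexHull ℝ (Set.range y)) :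
    ∀ w : EuclideanSpace ℝ (Fin m),
      (1 / (p : ℝ)) * ∑ i, l ((Finset.univ.sup'
          (Finset.univ_nonempty_iff.mpr (Fin.pos_iff_nonempty.mp hq))
          fun j => ⟪(0 : EuclideanSpace ℝ (Fin m)), y j⟫_ℝ)
            - ⟪(0 : EuclideanSpace ℝ (Fin m)), x i⟫_ℝ)
        + lam / 2 * ‖(0 : EuclideanSpace ℝ (Fin m))‖ ^ 2 ≤
      (1 / (p : ℝ)) * ∑ i, l ((Finset.univ.sup'
          (Finset.univ_nonempty_iff.mpr (Fin.pos_iff_nonempty.mp hq))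
          fun j => ⟪w, y j⟫_ℝ) - ⟪w, x i⟫_ℝ)
        + lam / 2 * ‖w‖ ^ 2 := by
  intro w
  have hne : (Finset.univ : Finset (Fin q)).Nonempty :=
    Finset.univ_nonempty_iff.mpr (Fin.pos_iff_nonempty.mp hq)
  -- each summand on the right is at least 1
  have key : ∀ i : Fin p,
      (1 : ℝ) ≤ l ((Finset.univ.sup' hne fun j => ⟪w, y j⟫_ℝ) - ⟪w, x i⟫_ℝ) := by
    intro i
    have hx : ⟪w, x i⟫_ℝ ≤ Finset.univ.sup' hne fun j => ⟪w, y j⟫_ℝ := by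
      have hconv : Convex ℝ {v : EuclideanSpace ℝ (Fin m) |
          ⟪w, v⟫_ℝ ≤ Finset.univ.sup' hne fun j => ⟪w, y j⟫_ℝ} :=
        convex_halfSpace_le (f := fun v => ⟪w, v⟫_ℝ)
          { map_add := fun a b => inner_add_right w a b
            map_smul := fun c a => real_inner_smul_right w a c } _
      have hsub : Set.range y ⊆ {v : EuclideanSpace ℝ (Fin m) |
          ⟪w, v⟫_ℝ ≤ Finset.univ.sup' hne fun j => ⟪w, y j⟫_ℝ} := by
        rintro _ ⟨j, rfl⟩
        exact Finset.le_sup' (fun j => ⟪w, y j⟫_ℝ) (Finset.mem_univ j)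
      exact convexHull_min hsub hconv (hhull i)
    calc (1 : ℝ) = l 0 := hl_zero.symm
      _ ≤ _ := hl_mono (by linarith)
  have hzero : ∀ i : Fin p,
      l ((Finset.univ.sup' hne fun j => ⟪(0 : EuclideanSpace ℝ (Fin m)), y j⟫_ℝ)
        - ⟪(0 : EuclideanSpace ℝ (Fin m)), x i⟫_ℝ) = 1 := by
    intro i
    simp [hl_zero]
  rcases Nat.eq_zero_or_pos p with hp | hp
  · subst hp
    have h0 : (0:ℝ) ≤ lam / 2 * ‖w‖ ^ 2 := by positivity
    simpa using h0
  · have h1 : (1 / (p : ℝ)) * ∑ i : Fin p, l ((Finset.univ.sup' hne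
        fun j => ⟪(0 : EuclideanSpace ℝ (Fin m)), y j⟫_ℝ)
          - ⟪(0 : EuclideanSpace ℝ (Fin m)), x i⟫_ℝ) = 1 := by
      rw [Finset.sum_congr rfl fun i _ => hzero i]
      simp
      field_simp
    have h2 : (p : ℝ) ≤ ∑ i : Fin p, l ((Finset.univ.sup' hne
        fun j => ⟪w, y j⟫_ℝ) - ⟪w, x i⟫_ℝ) := by
      calc (p : ℝ) = ∑ _i : Fin p, (1 : ℝ) := by simp
        _ ≤ _ := Finset.sum_le_sum fun i _ => key i
    have hpp : (0 : ℝ) < p := by exact_mod_cast hp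
    have : (1 : ℝ) ≤ (1 / (p : ℝ)) * ∑ i : Fin p, l ((Finset.univ.sup' hne
        fun j => ⟪w, y j⟫_ℝ) - ⟪w, x i⟫_ℝ) := by
      rw [div_mul_eq_mul_div, one_mul, le_div_iff₀ hpp, one_mul]
      exact h2
    have hnorm : (0 : ℝ) ≤ lam / 2 * ‖w‖ ^ 2 := by positivity
    simp only [norm_zero]
    nlinarith [h1]
end

section
/- Let X = {x_1, ..., x_n} be samples in R^m, of which a subset of size p are designated positive samples, let l : R -> R be a surrogate function (convex, nonnegative, nondecreasing, with l(0) = 1) that is differentiable at 0, let lambda >= 0, and let k be a positive integer with k <= p. Define the TopMean objective f(w) = (1/p) * sum over positive samples x of l(t(w) - <w, x>) + (lambda/2) * ||w||^2, where t(w) is the mean of the k largest scores among <w, x_1>, ..., <w, x_n>. Then f(0) <= f(w) for every w in R^m, i.e., w = 0 is a global minimizer of f. (This is the case k = ceil(n*tau) with n^+ >= n*tau.) -/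
open scoped InnerProductSpace

/-- The sum of the `k` largest elements of a finite multiset of reals
(counted with multiplicity). -/
noncomputable def sumTopK (s : Multiset ℝ) (k : ℕ) : ℝ :=
  ((s.sort (· ≤ ·)).drop (Multiset.card s - k)).sum

/-- The mean of the `k` largest elements of a finite multiset of reals. -/
noncomputable def meanTopK (s : Multiset ℝ) (k : ℕ) : ℝ :=
  sumTopK s k / k

/-!
At `w = 0` every score vanishes, so the threshold is `0` and the objective equals `l 0 = 1`.
For arbitrary `w`, the mean of the `k` largest scores is at least the mean of the `#P ≥ k`
largest ones, which in turn dominates the mean score of the positive samples. Hence the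
arguments `t(w) - ⟪w, xᵢ⟫` of the loss have nonnegative average over `P`, and Jensen's inequality
together with monotonicity of `l` bounds the average loss below by `l 0 = 1`; the regularizer
is nonnegative.
-/

open Finset in
theorem ConvexOn.map_le_sum_div_card_of_monotone {ι : Type*} {l : ℝ → ℝ}
    (hconv : ConvexOn ℝ Set.univ l) (hmono : Monotone l) {P : Finset ι} (hP : P.Nonempty)
    {z : ι → ℝ} {a : ℝ} (ha : a ≤ (∑ i ∈ P, z i) / #P) :
    l a ≤ (∑ i ∈ P, l (z i)) / #P := by
  have hcard : (0 : ℝ) < #P := by exact_mod_cast hP.card_pos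
  have hjensen := hconv.map_sum_le (t := P) (w := fun _ => 1 / (#P : ℝ)) (p := z)
    (fun _ _ => by positivity) (by simp [hcard.ne']) (fun _ _ => Set.mem_univ _)
  simp only [smul_eq_mul, one_div_mul_eq_div, ← Finset.sum_div] at hjensen
  exact (hmono ha).trans hjensen

namespace List

variable {L T A B : List ℝ}

theorem length_mul_sum_le_length_mul_sum (h : ∀ a ∈ A, ∀ b ∈ B, a ≤ b) :
    B.length * A.sum ≤ A.length * B.sum := by
  induction A with
  | nil => simp
  | cons a A ih =>
    have ha : B.length * a ≤ B.sum := by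
      simpa using B.card_nsmul_le_sum a (h a mem_cons_self)
    have hA := ih fun a' ha' => h a' (mem_cons_of_mem a ha')
    simp only [sum_cons, length_cons, Nat.cast_succ]
    linarith

theorem sum_div_length_le_drop (hL : L.Pairwise (· ≤ ·)) {d : ℕ} (hd : d < L.length) :
    L.sum / L.length ≤ (L.drop d).sum / (L.drop d).length := by
  have hsplit := L.take_append_drop d
  have hcross : ∀ a ∈ L.take d, ∀ b ∈ L.drop d, a ≤ b := by
    rw [← hsplit] at hL
    exact (pairwise_append.mp hL).2.2
  have hpos : (0 : ℝ) < (L.drop d).length := by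
    simpa only [length_drop, Nat.cast_pos, tsub_pos_iff_lt] using hd
  have hlen : (L.length : ℝ) = (L.take d).length + (L.drop d).length := by
    rw [← Nat.cast_add, ← length_append, hsplit]
  have hsum : L.sum = (L.take d).sum + (L.drop d).sum := by
    rw [← sum_append, hsplit]
  rw [div_le_div_iff₀ (by linarith) hpos, hsum, hlen]
  nlinarith [length_mul_sum_le_length_mul_sum hcross]

theorem Sublist.sum_le_sum_drop (hT : T <+ L) (hL : L.Pairwise (· ≤ ·)) :
    T.sum ≤ (L.drop (L.length - T.length)).sum := by
  induction hT with
  | slnil => simp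
  | @cons T L a hT ih =>
    have hlen := hT.length_le
    rw [length_cons, Nat.sub_add_comm hlen, drop_succ_cons]
    exact ih (pairwise_cons.mp hL).2
  | @cons_cons T L a hT ih =>
    obtain ⟨haL, hL⟩ := pairwise_cons.mp hL
    specialize ih hL
    rw [length_cons, length_cons, Nat.add_sub_add_right]
    cases hd : L.length - T.length with
    | zero =>
      rw [hd, drop_zero] at ih
      rw [drop_zero, sum_cons, sum_cons]
      linarith
    | succ d =>
      have hdL : d < L.length := by omega
      rw [hd] at ih
      rw [drop_succ_cons, drop_eq_getElem_cons hdL, sum_cons, sum_cons]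
      linarith [haL _ (getElem_mem hdL)]

end List

namespace Multiset

variable {s t : Multiset ℝ} {k p : ℕ}

theorem sum_le_sumTopK (h : t ≤ s) : t.sum ≤ sumTopK s (card t) := by
  have hsort : (t.sort (· ≤ ·) : Multiset ℝ) ≤ s.sort (· ≤ ·) := by
    rwa [sort_eq, sort_eq]
  obtain ⟨T, hperm, hT⟩ := coe_le.mp hsort
  have hTsum : T.sum = t.sum := by
    rw [hperm.sum_eq, ← sum_coe, sort_eq]
  have hTlen : T.length = card t := by
    rw [hperm.length_eq, length_sort]
  simpa only [sumTopK, hTsum, hTlen, length_sort] using hT.sum_le_sum_drop (pairwise_sort _ _)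

theorem meanTopK_le_meanTopK (hk : 0 < k) (hkp : k ≤ p) (hp : p ≤ card s) :
    meanTopK s p ≤ meanTopK s k := by
  set L := (s.sort (· ≤ ·)).drop (card s - p)
  have hL : L.Pairwise (· ≤ ·) := (pairwise_sort _ _).drop
  have hlen : L.length = p := by simp only [List.length_drop, length_sort, L]; omega
  have hdrop : L.drop (p - k) = (s.sort (· ≤ ·)).drop (card s - k) := by
    rw [List.drop_drop]; congr 1; omega
  have := List.sum_div_length_le_drop hL (d := p - k) (by omega)
  rwa [hdrop, hlen, List.length_drop, length_sort, Nat.sub_sub_self (hkp.trans hp)] at this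

theorem sum_div_card_le_meanTopK (h : t ≤ s) (hk : 0 < k) (hkt : k ≤ card t) :
    t.sum / card t ≤ meanTopK s k :=
  (div_le_div_of_nonneg_right (sum_le_sumTopK h) (Nat.cast_nonneg _)).trans
    (meanTopK_le_meanTopK hk hkt (card_le_card h))

theorem meanTopK_replicate_zero (n k : ℕ) : meanTopK (replicate n 0) k = 0 := by
  rw [meanTopK, sumTopK, List.sum_eq_zero, zero_div]
  intro a ha
  exact eq_of_mem_replicate ((mem_sort _).mp (List.mem_of_mem_drop ha))

end Multiset

theorem topmean_zero_global_min_general {m n : ℕ}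
    (x : Fin n → EuclideanSpace ℝ (Fin m)) (P : Finset (Fin n))
    (l : ℝ → ℝ) (hl_conv : ConvexOn ℝ Set.univ l)
    (hl_mono : Monotone l) (hl_zero : l 0 = 1)
    (lam : ℝ) (hlam : 0 ≤ lam)
    (k : ℕ) (hk1 : 1 ≤ k) (hkP : k ≤ P.card) :
    ∀ w : EuclideanSpace ℝ (Fin m),
      (1 / (P.card : ℝ)) * ∑ i ∈ P,
          l (meanTopK (Multiset.map (fun j => ⟪(0 : EuclideanSpace ℝ (Fin m)), x j⟫_ℝ)
              Finset.univ.val) k - ⟪(0 : EuclideanSpace ℝ (Fin m)), x i⟫_ℝ)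
        + lam / 2 * ‖(0 : EuclideanSpace ℝ (Fin m))‖ ^ 2 ≤
      (1 / (P.card : ℝ)) * ∑ i ∈ P,
          l (meanTopK (Multiset.map (fun j => ⟪w, x j⟫_ℝ) Finset.univ.val) k - ⟪w, x i⟫_ℝ)
        + lam / 2 * ‖w‖ ^ 2 := by
  intro w
  have hP : P.Nonempty := Finset.card_pos.mp (by omega)
  set t := meanTopK (Multiset.map (fun j => ⟪w, x j⟫_ℝ) Finset.univ.val) k
  have hobjective_zero : (1 / (P.card : ℝ)) * ∑ i ∈ P,
      l (meanTopK (Multiset.map (fun j => ⟪(0 : EuclideanSpace ℝ (Fin m)), x j⟫_ℝ)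
        Finset.univ.val) k - ⟪(0 : EuclideanSpace ℝ (Fin m)), x i⟫_ℝ)
      + lam / 2 * ‖(0 : EuclideanSpace ℝ (Fin m))‖ ^ 2 = 1 := by
    simp only [inner_zero_left, Multiset.map_const', Multiset.meanTopK_replicate_zero, sub_zero,
      hl_zero, Finset.sum_const, nsmul_eq_mul, mul_one, norm_zero]
    rw [one_div_mul_cancel (by exact_mod_cast hP.card_pos.ne')]
    ring
  have hthreshold : (∑ i ∈ P, ⟪w, x i⟫_ℝ) / P.card ≤ t := by
    have h := Multiset.sum_div_card_le_meanTopK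
      (Multiset.map_le_map (f := fun j => ⟪w, x j⟫_ℝ) (Finset.val_le_iff.mpr P.subset_univ))
      hk1 (by rwa [Multiset.card_map])
    rwa [Multiset.card_map] at h
  have hloss : 1 ≤ (∑ i ∈ P, l (t - ⟪w, x i⟫_ℝ)) / P.card := by
    rw [← hl_zero]
    refine hl_conv.map_le_sum_div_card_of_monotone hl_mono hP ?_
    rw [Finset.sum_sub_distrib, Finset.sum_const, nsmul_eq_mul, sub_div,
      mul_div_cancel_left₀ _ (by exact_mod_cast hP.card_pos.ne')]
    linarith
  have hreg : 0 ≤ lam / 2 * ‖w‖ ^ 2 := by positivity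
  rw [hobjective_zero, one_div_mul_eq_div]
  linarith

/-- for the TopMean objective, whose threshold is the mean of the `k` largest
scores over *all* samples, if `k` is at most the number of positive samples then `w = 0` is a
global minimizer. -/
theorem topmean_zero_global_min {m n : ℕ}
    (x : Fin n → EuclideanSpace ℝ (Fin m)) (P : Finset (Fin n))
    (l : ℝ → ℝ) (hl_conv : ConvexOn ℝ Set.univ l) (hl_nonneg : ∀ z, 0 ≤ l z)
    (hl_mono : Monotone l) (hl_zero : l 0 = 1) (hl_diff : DifferentiableAt ℝ l 0)
    (lam : ℝ) (hlam : 0 ≤ lam)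
    (k : ℕ) (hk1 : 1 ≤ k) (hkP : k ≤ P.card) :
    ∀ w : EuclideanSpace ℝ (Fin m),
      (1 / (P.card : ℝ)) * ∑ i ∈ P,
          l (meanTopK (Multiset.map (fun j => ⟪(0 : EuclideanSpace ℝ (Fin m)), x j⟫_ℝ)
              Finset.univ.val) k - ⟪(0 : EuclideanSpace ℝ (Fin m)), x i⟫_ℝ)
        + lam / 2 * ‖(0 : EuclideanSpace ℝ (Fin m))‖ ^ 2 ≤
      (1 / (P.card : ℝ)) * ∑ i ∈ P,
          l (meanTopK (Multiset.map (fun j => ⟪w, x j⟫_ℝ) Finset.univ.val) k - ⟪w, x i⟫_ℝ)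
        + lam / 2 * ‖w‖ ^ 2 :=
  topmean_zero_global_min_general x P l hl_conv hl_mono hl_zero lam hlam k hk1 hkP
end

section
/- Let x_1, ..., x_p in R^m be the positive samples and y_1, ..., y_q in R^m the negative samples, set n = p + q, and let tau in (0,1). Suppose w in R^m satisfies (1/p) * sum_{i=1}^p <w, x_i> > (1/q) * sum_{j=1}^q <w, y_j>. Then there exists beta_0 > 0 such that for every beta in (0, beta_0) there exists t in R with (1/n) * [sum_{i=1}^p max(0, 1 + beta*(<w, x_i> - t)) + sum_{j=1}^q max(0, 1 + beta*(<w, y_j> - t))] = tau, and (1/p) * sum_{i=1}^p max(0, 1 + t - <w, x_i>) < 1 + (1 - tau)/beta. (The right-hand side 1 + (1 - tau)/beta is the Pat&Mat objective value at w = 0, whose surrogate quantile is t = (1 - tau)/beta.) -/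
open scoped InnerProductSpace

/-- if the mean positive score exceeds the mean negative score, then for all
sufficiently small `β > 0` the Pat&Mat objective at `w` (with the hinge surrogate and its
surrogate top `τ`-quantile threshold) is strictly smaller than its value `1 + (1-τ)/β`
at `w = 0`. -/
theorem patmat_beats_zero {m p q : ℕ} (hp : 0 < p) (hq : 0 < q)
    (x : Fin p → EuclideanSpace ℝ (Fin m)) (y : Fin q → EuclideanSpace ℝ (Fin m))
    (τ : ℝ) (hτ : τ ∈ Set.Ioo (0 : ℝ) 1)
    (w : EuclideanSpace ℝ (Fin m))
    (hw : (1 / (q : ℝ)) * ∑ j, ⟪w, y j⟫_ℝ < (1 / (p : ℝ)) * ∑ i, ⟪w, x i⟫_ℝ) :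
    ∃ β₀ > (0 : ℝ), ∀ β ∈ Set.Ioo (0 : ℝ) β₀, ∃ t : ℝ,
      (1 / ((p : ℝ) + (q : ℝ))) *
          ((∑ i, max 0 (1 + β * (⟪w, x i⟫_ℝ - t)))
            + ∑ j, max 0 (1 + β * (⟪w, y j⟫_ℝ - t))) = τ ∧
      (1 / (p : ℝ)) * ∑ i, max 0 (1 + (t - ⟪w, x i⟫_ℝ)) < 1 + (1 - τ) / β := by
  obtain ⟨hτ0, hτ1⟩ := hτ
  have hp' : (0:ℝ) < p := by exact_mod_cast hp
  have hq' : (0:ℝ) < q := by exact_mod_cast hq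
  have hn : (0:ℝ) < (p:ℝ) + q := by linarith
  set S : ℝ := ∑ i, ⟪w, x i⟫_ℝ with hS
  set R : ℝ := ∑ j, ⟪w, y j⟫_ℝ with hR
  set c : ℝ := (S + R) / ((p:ℝ) + q) with hc
  set K : ℝ := 1 + ∑ i, |⟪w, x i⟫_ℝ - c| + ∑ j, |⟪w, y j⟫_ℝ - c| with hK
  have hsum1 : (0:ℝ) ≤ ∑ i, |⟪w, x i⟫_ℝ - c| := Finset.sum_nonneg fun i _ => abs_nonneg _
  have hsum2 : (0:ℝ) ≤ ∑ j, |⟪w, y j⟫_ℝ - c| := Finset.sum_nonneg fun j _ => abs_nonneg _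
  have hK1 : (1:ℝ) ≤ K := by rw [hK]; linarith
  have hK0 : (0:ℝ) < K := by linarith
  have hKs : ∀ i, |⟪w, x i⟫_ℝ - c| ≤ K := by
    intro i
    have h1 : |⟪w, x i⟫_ℝ - c| ≤ ∑ i, |⟪w, x i⟫_ℝ - c| :=
      Finset.single_le_sum (f := fun i => |⟪w, x i⟫_ℝ - c|) (fun i _ => abs_nonneg _)
        (Finset.mem_univ i)
    rw [hK]; linarith
  have hKr : ∀ j, |⟪w, y j⟫_ℝ - c| ≤ K := by
    intro j
    have h1 : |⟪w, y j⟫_ℝ - c| ≤ ∑ j, |⟪w, y j⟫_ℝ - c| :=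
      Finset.single_le_sum (f := fun j => |⟪w, y j⟫_ℝ - c|) (fun j _ => abs_nonneg _)
        (Finset.mem_univ j)
    rw [hK]; linarith
  have hmin : (0:ℝ) < min τ (1-τ) := lt_min hτ0 (by linarith)
  refine ⟨min τ (1-τ) / K, by positivity, ?_⟩
  rintro β ⟨hβ0, hββ⟩
  have hβK : β * K < min τ (1-τ) := (lt_div_iff₀ hK0).mp hββ
  have hβτ : β * K < τ := lt_of_lt_of_le hβK (min_le_left _ _)
  have hβτ' : β * K < 1 - τ := lt_of_lt_of_le hβK (min_le_right _ _)
  set t : ℝ := (1-τ)/β + c with ht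
  have key1 : ∀ z : ℝ, |z - c| ≤ K → max 0 (1 + β*(z - t)) = τ + β*(z-c) := by
    intro z hz
    have h1 : 1 + β*(z - t) = τ + β*(z - c) := by
      rw [ht]; field_simp; ring
    rw [h1, max_eq_right]
    have h2 := neg_abs_le (z - c)
    nlinarith [abs_nonneg (z-c)]
  have key2 : ∀ i, max 0 (1 + (t - ⟪w, x i⟫_ℝ)) = 1 + (t - ⟪w, x i⟫_ℝ) := by
    intro i
    apply max_eq_right
    obtain ⟨h1, h2⟩ := abs_le.mp (hKs i)
    have hb : β * (⟪w, x i⟫_ℝ - c - 1) ≤ 1 - τ := by nlinarith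
    have hd : (⟪w, x i⟫_ℝ - c - 1) ≤ (1-τ)/β := (le_div_iff₀ hβ0).mpr (by linarith [hb])
    rw [ht]; linarith
  have hnc : ((p:ℝ) + q) * c = S + R := by rw [hc]; field_simp
  refine ⟨t, ?_, ?_⟩
  · have e1 : ∑ i, max 0 (1 + β * (⟪w, x i⟫_ℝ - t)) = ∑ i, (τ + β*(⟪w, x i⟫_ℝ - c)) :=
      Finset.sum_congr rfl (fun i _ => key1 _ (hKs i))
    have e2 : ∑ j, max 0 (1 + β * (⟪w, y j⟫_ℝ - t)) = ∑ j, (τ + β*(⟪w, y j⟫_ℝ - c)) :=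
      Finset.sum_congr rfl (fun j _ => key1 _ (hKr j))
    have s1 : ∑ i, (τ + β*(⟪w, x i⟫_ℝ - c)) = (p:ℝ)*τ + β*(S - (p:ℝ)*c) := by
      rw [Finset.sum_add_distrib, Finset.sum_const, Finset.card_univ, Fintype.card_fin,
        nsmul_eq_mul, ← Finset.mul_sum]
      simp only [Finset.sum_sub_distrib, Finset.sum_const, Finset.card_univ, Fintype.card_fin,
        nsmul_eq_mul, ← hS]
    have s2 : ∑ j, (τ + β*(⟪w, y j⟫_ℝ - c)) = (q:ℝ)*τ + β*(R - (q:ℝ)*c) := by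
      rw [Finset.sum_add_distrib, Finset.sum_const, Finset.card_univ, Fintype.card_fin,
        nsmul_eq_mul, ← Finset.mul_sum]
      simp only [Finset.sum_sub_distrib, Finset.sum_const, Finset.card_univ, Fintype.card_fin,
        nsmul_eq_mul, ← hR]
    have hsum : (p:ℝ)*τ + β*(S - (p:ℝ)*c) + ((q:ℝ)*τ + β*(R - (q:ℝ)*c)) = ((p:ℝ)+q)*τ := by
      linear_combination (-β) * hnc
    rw [e1, e2, s1, s2, hsum]
    field_simp
  · have e3 : ∑ i, max 0 (1 + (t - ⟪w, x i⟫_ℝ)) = (p:ℝ)*(1+t) - S := by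
      rw [Finset.sum_congr rfl (fun i _ => key2 i)]
      simp only [Finset.sum_add_distrib, Finset.sum_sub_distrib, Finset.sum_const,
        Finset.card_univ, Fintype.card_fin, nsmul_eq_mul, ← hS]
      ring
    rw [e3]
    have hRq : R * p < S * q := by
      have h1 := hw
      rw [one_div_mul_eq_div, one_div_mul_eq_div] at h1
      exact (div_lt_div_iff₀ hq' hp').mp h1
    have hcS : c < S / p := by
      rw [hc, div_lt_div_iff₀ hn hp']
      nlinarith
    have e4 : (1/ (p:ℝ)) * ((p:ℝ)*(1+t) - S) = 1 + t - S/(p:ℝ) := by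
      field_simp
    rw [e4, ht]
    linarith
end

section
/- Let z_1, ..., z_n be real numbers, let l : R -> R be a surrogate function (convex, nonnegative, nondecreasing, with l(0) = 1) that is differentiable at 0 with derivative c > 0, let beta > 0, and let k be an integer with 1 <= k <= n. If t in R satisfies sum_{i=1}^n l(beta*(z_i - t)) = k, then t >= (1/k) * (sum of the k largest values among z_1, ..., z_n). In particular, the Pat&Mat surrogate quantile threshold is greater than or equal to the TopMean threshold (the mean of the k = n*tau largest scores), and likewise for their Neyman-Pearson variants. -/
theorem ConvexOn.add_deriv_mul_sub_le {f : ℝ → ℝ} (hf : ConvexOn ℝ Set.univ f) {x : ℝ}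
    (hd : DifferentiableAt ℝ f x) (y : ℝ) : f x + deriv f x * (y - x) ≤ f y := by
  rcases lt_trichotomy y x with h | rfl | h
  · have := hf.slope_le_deriv (Set.mem_univ y) (Set.mem_univ x) h hd
    rw [slope_def_field, div_le_iff₀ (sub_pos.2 h)] at this
    linarith
  · simp
  · have := hf.deriv_le_slope (Set.mem_univ x) (Set.mem_univ y) h hd
    rw [slope_def_field, le_div_iff₀ (sub_pos.2 h)] at this
    linarith

theorem Multiset.sum_map_le_sum_map_of_le {α : Type*} {m s : Multiset α} (hms : m ≤ s)
    {f : α → ℝ} (hf : ∀ x ∈ s, 0 ≤ f x) : (m.map f).sum ≤ (s.map f).sum := by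
  obtain ⟨u, rfl⟩ := Multiset.le_iff_exists_add.1 hms
  rw [Multiset.map_add, Multiset.sum_add, le_add_iff_nonneg_right]
  exact Multiset.sum_nonneg fun y hy => by
    obtain ⟨x, hx, rfl⟩ := Multiset.mem_map.1 hy
    exact hf x (Multiset.mem_add.2 (Or.inr hx))

theorem Multiset.exists_le_card_eq_sum_eq_sumTopK {s : Multiset ℝ} {k : ℕ} (hk : k ≤ card s) :
    ∃ m ≤ s, card m = k ∧ m.sum = sumTopK s k := by
  refine ⟨((s.sort (· ≤ ·)).drop (card s - k) : List ℝ), ?_, ?_, Multiset.sum_coe _⟩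
  · calc (((s.sort (· ≤ ·)).drop (card s - k) : List ℝ) : Multiset ℝ)
        ≤ ((s.sort (· ≤ ·) : List ℝ) : Multiset ℝ) :=
          Multiset.coe_le.2 (List.drop_sublist _ _).subperm
      _ = s := Multiset.sort_eq _ _
  · simp [Nat.sub_sub_self hk]

theorem Multiset.sum_le_card_mul_of_sum_map_le_card {m : Multiset ℝ} {g : ℝ → ℝ} {a t : ℝ}
    (ha : 0 < a) (hg : ∀ x, 1 + a * (x - t) ≤ g x) (hm : (m.map g).sum ≤ card m) :
    m.sum ≤ card m * t := by
  have h : (card m : ℝ) + a * (m.sum - card m * t) ≤ (m.map g).sum := by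
    calc (card m : ℝ) + a * (m.sum - card m * t) = (m.map fun x => 1 + a * (x - t)).sum := by
          simp [Multiset.sum_map_add, Multiset.sum_map_mul_left, Multiset.sum_map_sub]
      _ ≤ (m.map g).sum := Multiset.sum_map_le_sum_map _ _ fun x _ => hg x
  have : a * (m.sum - card m * t) ≤ 0 := by linarith
  linarith [nonpos_of_mul_nonpos_right this ha]

theorem surrogate_quantile_ge_topk_mean_general {n : ℕ} (z : Fin n → ℝ)
    (l : ℝ → ℝ) (hl_conv : ConvexOn ℝ Set.univ l) (hl_nonneg : ∀ z, 0 ≤ l z)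
    (hl_zero : l 0 = 1)
    (hl_diff : DifferentiableAt ℝ l 0) (hc : 0 < deriv l 0)
    (β : ℝ) (hβ : 0 < β)
    (k : ℕ) (hk1 : 1 ≤ k) (hkn : k ≤ n)
    (t : ℝ) (ht : ∑ i, l (β * (z i - t)) = (k : ℝ)) :
    (1 / (k : ℝ)) * sumTopK (Multiset.map z Finset.univ.val) k ≤ t := by
  set s := Multiset.map z Finset.univ.val
  obtain ⟨m, hms, hcard, hm⟩ := Multiset.exists_le_card_eq_sum_eq_sumTopK (s := s) (k := k)
    (by simpa [s] using hkn)
  have htotal : (s.map fun x => l (β * (x - t))).sum = m.card := by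
    rw [Multiset.map_map, hcard]
    exact ht
  have htop : m.sum ≤ m.card * t := by
    refine Multiset.sum_le_card_mul_of_sum_map_le_card (mul_pos hc hβ) (fun x => ?_)
      ((Multiset.sum_map_le_sum_map_of_le hms fun x _ => hl_nonneg _).trans htotal.le)
    have := hl_conv.add_deriv_mul_sub_le hl_diff (β * (x - t))
    rw [hl_zero] at this
    linarith
  have hk : (0 : ℝ) < m.card := by rw [hcard]; exact_mod_cast hk1
  rw [← hm, ← hcard, one_div_mul_eq_div, div_le_iff₀ hk]
  linarith

/-- any solution `t` of the surrogate-quantile equation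
`∑ᵢ l(β(zᵢ - t)) = k` is at least the mean of the `k` largest values among the `zᵢ`. -/
theorem surrogate_quantile_ge_topk_mean {n : ℕ} (z : Fin n → ℝ)
    (l : ℝ → ℝ) (hl_conv : ConvexOn ℝ Set.univ l) (hl_nonneg : ∀ z, 0 ≤ l z)
    (hl_mono : Monotone l) (hl_zero : l 0 = 1)
    (hl_diff : DifferentiableAt ℝ l 0) (hc : 0 < deriv l 0)
    (β : ℝ) (hβ : 0 < β)
    (k : ℕ) (hk1 : 1 ≤ k) (hkn : k ≤ n)
    (t : ℝ) (ht : ∑ i, l (β * (z i - t)) = (k : ℝ)) :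
    (1 / (k : ℝ)) * sumTopK (Multiset.map z Finset.univ.val) k ≤ t :=
  surrogate_quantile_ge_topk_mean_general z l hl_conv hl_nonneg hl_zero hl_diff hc β hβ k hk1 hkn t
    ht
end

section
/- Let x_1, ..., x_p in R^m be the positive samples and y_1, ..., y_q in R^m the negative samples, let l : R -> R be a surrogate function (convex, nonnegative, nondecreasing, with l(0) = 1), let lambda >= 0, and let k be an integer with 1 <= k <= q. Then the TopPushK objective f(w) = (1/p) * sum_{i=1}^p l(t(w) - <w, x_i>) + (lambda/2) * ||w||^2, where t(w) is the mean of the k largest values among <w, y_1>, ..., <w, y_q>, is a convex function of w. (For k = 1 this is the convexity of the TopPush objective; applied to all samples with k = n*tau it gives convexity of the TopMean and TopMean-NP objectives.) -/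
/-!
The sum of the `k` largest entries of a finite family of reals is the largest sum over a
`k`-element subfamily. Hence the TopPushK threshold is a nonnegative multiple of a finite maximum
of linear functions of `w`, so it is convex; each loss term composes the convex nondecreasing
surrogate with a convex function, and the regularizer is convex.
-/

open scoped InnerProductSpace

open Finset

section Convexity

variable {𝕜 E β : Type*} [Semiring 𝕜] [PartialOrder 𝕜] [AddCommMonoid E] [SMul 𝕜 E]
  [AddCommMonoid β] {s : Set E}

theorem ConvexOn.sum [PartialOrder β] [IsOrderedAddMonoid β] [Module 𝕜 β] {ι : Type*}
    {t : Finset ι} {f : ι → E → β} (hs : Convex 𝕜 s) (hf : ∀ i ∈ t, ConvexOn 𝕜 s (f i)) :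
    ConvexOn 𝕜 s fun x => ∑ i ∈ t, f i x := by
  classical
  induction t using Finset.induction_on with
  | empty => simpa using convexOn_const (0 : β) hs
  | insert a t hat ih =>
    simp only [sum_insert hat]
    exact (hf a (mem_insert_self a t)).add (ih fun i hi => hf i (mem_insert_of_mem hi))

theorem ConvexOn.finset_sup' [LinearOrder β] [IsOrderedAddMonoid β] [Module 𝕜 β]
    [PosSMulStrictMono 𝕜 β] {ι : Type*} {t : Finset ι} (ht : t.Nonempty) {f : ι → E → β}
    (hf : ∀ i ∈ t, ConvexOn 𝕜 s (f i)) : ConvexOn 𝕜 s fun x => t.sup' ht fun i => f i x := by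
  induction ht using Finset.Nonempty.cons_induction with
  | singleton a => simpa using hf a (mem_singleton_self a)
  | cons a t hat ht ih =>
    simp only [sup'_cons ht]
    exact (hf a (mem_cons_self a t)).sup (ih fun i hi => hf i (mem_cons_of_mem hi))

theorem ConvexOn.comp_of_monotone [PartialOrder β] [SMul 𝕜 β] {α : Type*} [AddCommMonoid α]
    [PartialOrder α] [SMul 𝕜 α] {f : E → β} {g : β → α} (hg : ConvexOn 𝕜 Set.univ g)
    (hg_mono : Monotone g) (hf : ConvexOn 𝕜 s f) : ConvexOn 𝕜 s (g ∘ f) :=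
  ⟨hf.1, fun _ hx _ hy _ _ ha hb hab =>
    (hg_mono (hf.2 hx hy ha hb hab)).trans (hg.2 trivial trivial ha hb hab)⟩

end Convexity

theorem List.Pairwise.sum_le_sum_drop {L : List ℝ} (hL : L.Pairwise (· ≤ ·)) {t : Multiset ℝ}
    (ht : t ≤ L) : t.sum ≤ (L.drop (L.length - Multiset.card t)).sum := by
  induction L generalizing t with
  | nil => simp [Multiset.le_zero.mp ht]
  | cons a L ih =>
    obtain ⟨ha, hL⟩ := List.pairwise_cons.mp hL
    rw [← Multiset.cons_coe] at ht
    by_cases hat : a ∈ t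
    · obtain ⟨t, rfl⟩ := Multiset.exists_cons_of_mem hat
      rw [Multiset.cons_le_cons_iff] at ht
      have hcard : Multiset.card t ≤ L.length := by simpa using Multiset.card_le_card ht
      rw [Multiset.sum_cons, Multiset.card_cons, List.length_cons,
        show L.length + 1 - (Multiset.card t + 1) = L.length - Multiset.card t by omega]
      have hj : L.length - Multiset.card t < (a :: L).length := by simp
      have hb : a ≤ (a :: L)[L.length - Multiset.card t] := by
        rcases List.mem_cons.mp (List.getElem_mem hj) with h | h
        · exact h.ge
        · exact ha _ h
      rw [List.drop_eq_getElem_cons hj, List.sum_cons, List.drop_succ_cons]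
      linarith [ih hL ht]
    · rw [Multiset.le_cons_of_notMem hat] at ht
      have hcard : Multiset.card t ≤ L.length := by simpa using Multiset.card_le_card ht
      rw [List.length_cons, show L.length + 1 - Multiset.card t = L.length - Multiset.card t + 1
        by omega, List.drop_succ_cons]
      exact ih hL ht

theorem sum_le_sumTopK {s t : Multiset ℝ} (ht : t ≤ s) : t.sum ≤ sumTopK s (Multiset.card t) := by
  have := (s.pairwise_sort (· ≤ ·)).sum_le_sum_drop (t := t) (by rwa [Multiset.sort_eq])
  rwa [Multiset.length_sort] at this

theorem exists_le_card_eq_sum_eq_sumTopK (s : Multiset ℝ) (k : ℕ) :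
    ∃ t ≤ s, Multiset.card t = min k (Multiset.card s) ∧ t.sum = sumTopK s k := by
  refine ⟨(s.sort (· ≤ ·)).drop (Multiset.card s - k), ?_, ?_, Multiset.sum_coe _⟩
  · conv_rhs => rw [← s.sort_eq (· ≤ ·)]
    exact Multiset.coe_le.mpr (List.drop_sublist _ _).subperm
  · rw [Multiset.coe_card, List.length_drop, Multiset.length_sort]
    omega

theorem sumTopK_min_card (s : Multiset ℝ) (k : ℕ) :
    sumTopK s (min k (Multiset.card s)) = sumTopK s k := by
  unfold sumTopK
  congr 2
  omega

/-- Subsets of size `min k (card ι)` also cover `k > card ι`, where `sumTopK` sums everything. -/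
theorem sumTopK_map_eq_sup' {ι : Type*} [Fintype ι] (f : ι → ℝ) (k : ℕ) :
    sumTopK (univ.val.map f) k =
      (univ.powersetCard (min k (Fintype.card ι))).sup'
        (powersetCard_nonempty.mpr (by simp)) (fun S => ∑ j ∈ S, f j) := by
  apply le_antisymm
  · obtain ⟨t, hts, htcard, htsum⟩ := exists_le_card_eq_sum_eq_sumTopK (univ.val.map f) k
    have hmem : t ∈ Multiset.powersetCard (min k (Fintype.card ι)) (univ.val.map f) :=
      Multiset.mem_powersetCard.mpr ⟨hts, by simpa using htcard⟩
    rw [Multiset.powersetCard_map, ← map_val_val_powersetCard, Multiset.map_map] at hmem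
    obtain ⟨S, hS, rfl⟩ := Multiset.mem_map.mp hmem
    rw [← htsum]
    exact le_sup'_of_le _ hS le_rfl
  · refine sup'_le _ _ fun S hS => ?_
    have hcard : Multiset.card (S.val.map f) = min k (Multiset.card (univ.val.map f)) := by
      simpa using (mem_powersetCard.mp hS).2
    have := sum_le_sumTopK (Multiset.map_le_map (val_le_iff.mpr (subset_univ S)) : S.val.map f ≤ _)
    rwa [hcard, sumTopK_min_card] at this

theorem convexOn_sumTopK {ι E : Type*} [Fintype ι] [AddCommMonoid E] [Module ℝ E] {s : Set E}
    (hs : Convex ℝ s) {f : ι → E → ℝ} (hf : ∀ j, ConvexOn ℝ s (f j)) (k : ℕ) :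
    ConvexOn ℝ s fun w => sumTopK (univ.val.map fun j => f j w) k := by
  simp only [sumTopK_map_eq_sup']
  exact ConvexOn.finset_sup' _ fun S _ => ConvexOn.sum hs fun j _ => hf j

theorem convexOn_meanTopK {ι E : Type*} [Fintype ι] [AddCommMonoid E] [Module ℝ E] {s : Set E}
    (hs : Convex ℝ s) {f : ι → E → ℝ} (hf : ∀ j, ConvexOn ℝ s (f j)) (k : ℕ) :
    ConvexOn ℝ s fun w => meanTopK (univ.val.map fun j => f j w) k := by
  simp only [meanTopK, div_eq_inv_mul]
  exact (convexOn_sumTopK hs hf k).smul (inv_nonneg.mpr k.cast_nonneg)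

theorem toppushk_objective_convex_general {m p q : ℕ}
    (x : Fin p → EuclideanSpace ℝ (Fin m)) (y : Fin q → EuclideanSpace ℝ (Fin m))
    (l : ℝ → ℝ) (hl_conv : ConvexOn ℝ Set.univ l)
    (hl_mono : Monotone l)
    (lam : ℝ) (hlam : 0 ≤ lam)
    (k : ℕ) :
    ConvexOn ℝ Set.univ (fun w : EuclideanSpace ℝ (Fin m) =>
      (1 / (p : ℝ)) * ∑ i,
          l (meanTopK (Multiset.map (fun j => ⟪w, y j⟫_ℝ) Finset.univ.val) k - ⟪w, x i⟫_ℝ)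
        + lam / 2 * ‖w‖ ^ 2) := by
  have hthreshold : ConvexOn ℝ Set.univ fun w : EuclideanSpace ℝ (Fin m) =>
      meanTopK (Multiset.map (fun j => ⟪w, y j⟫_ℝ) Finset.univ.val) k :=
    convexOn_meanTopK convex_univ (fun j => ((innerₗ _).flip (y j)).convexOn convex_univ) k
  have hloss (i : Fin p) : ConvexOn ℝ Set.univ fun w : EuclideanSpace ℝ (Fin m) =>
      l (meanTopK (Multiset.map (fun j => ⟪w, y j⟫_ℝ) Finset.univ.val) k - ⟪w, x i⟫_ℝ) :=
    hl_conv.comp_of_monotone hl_mono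
      (hthreshold.sub (((innerₗ _).flip (x i)).concaveOn convex_univ))
  have hreg : ConvexOn ℝ Set.univ fun w : EuclideanSpace ℝ (Fin m) => ‖w‖ ^ 2 :=
    convexOn_univ_norm.pow (fun _ _ => norm_nonneg _) 2
  exact ((ConvexOn.sum convex_univ fun i _ => hloss i).smul (by positivity)).add
    (hreg.smul (by positivity))

/-- the TopPushK objective (surrogate false-negative rate with threshold equal
to the mean of the `k` largest negative scores, plus `l²` regularization) is convex in `w`. -/
theorem toppushk_objective_convex {m p q : ℕ}
    (x : Fin p → EuclideanSpace ℝ (Fin m)) (y : Fin q → EuclideanSpace ℝ (Fin m))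
    (l : ℝ → ℝ) (hl_conv : ConvexOn ℝ Set.univ l) (hl_nonneg : ∀ z, 0 ≤ l z)
    (hl_mono : Monotone l) (hl_zero : l 0 = 1)
    (lam : ℝ) (hlam : 0 ≤ lam)
    (k : ℕ) (hk1 : 1 ≤ k) (hkq : k ≤ q) :
    ConvexOn ℝ Set.univ (fun w : EuclideanSpace ℝ (Fin m) =>
      (1 / (p : ℝ)) * ∑ i,
          l (meanTopK (Multiset.map (fun j => ⟪w, y j⟫_ℝ) Finset.univ.val) k - ⟪w, x i⟫_ℝ)
        + lam / 2 * ‖w‖ ^ 2) :=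
  toppushk_objective_convex_general x y l hl_conv hl_mono lam hlam k
end

section
/- Let x_1, ..., x_n be vectors in R^m, let l : R -> R be differentiable, let beta > 0 and tau in R, and suppose t : R^m -> R is differentiable and satisfies sum_{i=1}^n l(beta*(<w, x_i> - t(w))) = n*tau for all w in R^m. If at a point w_0 the denominator D = sum_{i=1}^n l'(beta*(<w_0, x_i> - t(w_0))) is nonzero, then the gradient of t at w_0 is given by grad t(w_0) = (1/D) * sum_{i=1}^n l'(beta*(<w_0, x_i> - t(w_0))) * x_i. -/
open scoped InnerProductSpace

/-!
Differentiating the identity `∑ᵢ l(β(⟪w, xᵢ⟫ - t w)) = n τ` at `w₀` gives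
`∑ᵢ l'(uᵢ) β (xᵢ - ∇t(w₀)) = 0` with `uᵢ = β(⟪w₀, xᵢ⟫ - t w₀)`.
Since `β ≠ 0` and `D = ∑ᵢ l'(uᵢ) ≠ 0`, this linear equation solves to
`∇t(w₀) = D⁻¹ ∑ᵢ l'(uᵢ) xᵢ`.
-/

open InnerProductSpace

section GradientCalculus

variable {F : Type*} [NormedAddCommGroup F] [InnerProductSpace ℝ F] [CompleteSpace F]
  {f g : F → ℝ} {f' g' w : F}

theorem hasGradientAt_inner_const (x w : F) : HasGradientAt (fun v => ⟪v, x⟫_ℝ) x w := by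
  have h : (fun v => ⟪v, x⟫_ℝ) = toDual ℝ F x := funext fun v => real_inner_comm x v
  rw [hasGradientAt_iff_hasFDerivAt, h]
  exact (toDual ℝ F x).hasFDerivAt

theorem HasGradientAt.sub (hf : HasGradientAt f f' w) (hg : HasGradientAt g g' w) :
    HasGradientAt (fun v => f v - g v) (f' - g') w := by
  rw [hasGradientAt_iff_hasFDerivAt, map_sub]
  exact hf.hasFDerivAt.sub hg.hasFDerivAt

theorem HasGradientAt.const_mul (c : ℝ) (hf : HasGradientAt f f' w) :
    HasGradientAt (fun v => c * f v) (c • f') w := by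
  rw [hasGradientAt_iff_hasFDerivAt, map_smul]
  exact hf.hasFDerivAt.const_smul c

theorem HasGradientAt.sum {ι : Type*} (s : Finset ι) {f : ι → F → ℝ} {f' : ι → F}
    (hf : ∀ i ∈ s, HasGradientAt (f i) (f' i) w) :
    HasGradientAt (fun v => ∑ i ∈ s, f i v) (∑ i ∈ s, f' i) w := by
  rw [hasGradientAt_iff_hasFDerivAt, map_sum]
  exact HasFDerivAt.fun_sum fun i hi => (hf i hi).hasFDerivAt

theorem HasDerivAt.comp_hasGradientAt {l : ℝ → ℝ} {l' : ℝ} (hl : HasDerivAt l l' (f w))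
    (hf : HasGradientAt f f' w) : HasGradientAt (fun v => l (f v)) (l' • f') w := by
  rw [hasGradientAt_iff_hasFDerivAt, map_smul]
  exact hl.comp_hasFDerivAt w hf.hasFDerivAt

end GradientCalculus

theorem eq_inv_sum_smul_sum_smul_of_sum_smul_sub_eq_zero {K V ι : Type*} [Field K]
    [AddCommGroup V] [Module K V] {s : Finset ι} {a : ι → K} {x : ι → V} {g : V}
    (h : ∑ i ∈ s, a i • (x i - g) = 0) (ha : ∑ i ∈ s, a i ≠ 0) :
    g = (∑ i ∈ s, a i)⁻¹ • ∑ i ∈ s, a i • x i := by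
  have hsum : ∑ i ∈ s, a i • x i = (∑ i ∈ s, a i) • g := by
    simpa only [smul_sub, Finset.sum_sub_distrib, ← Finset.sum_smul, sub_eq_zero]
      using h
  rw [hsum, inv_smul_smul₀ ha]

theorem gradient_eq_of_sum_comp_eventually_const {F ι : Type*} [NormedAddCommGroup F]
    [InnerProductSpace ℝ F] [CompleteSpace F] [Fintype ι] (x : ι → F) (l : ℝ → ℝ)
    {β c : ℝ} (hβ : β ≠ 0) (t : F → ℝ) (w₀ : F)
    (hl : ∀ i, DifferentiableAt ℝ l (β * (⟪w₀, x i⟫_ℝ - t w₀)))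
    (ht : DifferentiableAt ℝ t w₀)
    (hconst : ∀ᶠ w in nhds w₀, ∑ i, l (β * (⟪w, x i⟫_ℝ - t w)) = c)
    (hD : ∑ i, deriv l (β * (⟪w₀, x i⟫_ℝ - t w₀)) ≠ 0) :
    gradient t w₀ = (∑ i, deriv l (β * (⟪w₀, x i⟫_ℝ - t w₀)))⁻¹ •
      ∑ i, deriv l (β * (⟪w₀, x i⟫_ℝ - t w₀)) • x i := by
  set a : ι → ℝ := fun i => deriv l (β * (⟪w₀, x i⟫_ℝ - t w₀))
  have hgrad : HasGradientAt (fun w => ∑ i, l (β * (⟪w, x i⟫_ℝ - t w)))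
      (∑ i, a i • β • (x i - gradient t w₀)) w₀ :=
    HasGradientAt.sum _ fun i _ =>
      (hl i).hasDerivAt.comp_hasGradientAt (f := fun w => β * (⟪w, x i⟫_ℝ - t w))
        (((hasGradientAt_inner_const (x i) w₀).sub ht.hasGradientAt).const_mul β)
  have hzero : ∑ i, a i • β • (x i - gradient t w₀) = 0 :=
    hgrad.unique (hasGradientAt_const w₀ c |>.congr_of_eventuallyEq hconst)
  simp only [smul_comm (a _) β, ← Finset.smul_sum, smul_eq_zero, hβ, false_or]
    at hzero
  exact eq_inv_sum_smul_sum_smul_of_sum_smul_sub_eq_zero hzero hD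

/-- implicit differentiation of the surrogate quantile identity: if
`∑ᵢ l(β(⟪w, xᵢ⟫ - t(w))) = n·τ` for all `w`, then at any point where the denominator
`D = ∑ᵢ l'(β(⟪w₀, xᵢ⟫ - t(w₀)))` is nonzero, the gradient of `t` is the `l'`-weighted
average of the samples. -/
theorem gradient_of_implicit_threshold {m n : ℕ}
    (x : Fin n → EuclideanSpace ℝ (Fin m))
    (l : ℝ → ℝ) (hl : Differentiable ℝ l)
    (β τ : ℝ) (hβ : 0 < β)
    (t : EuclideanSpace ℝ (Fin m) → ℝ) (ht : Differentiable ℝ t)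
    (himp : ∀ w : EuclideanSpace ℝ (Fin m), ∑ i, l (β * (⟪w, x i⟫_ℝ - t w)) = (n : ℝ) * τ)
    (w₀ : EuclideanSpace ℝ (Fin m))
    (hD : (∑ i, deriv l (β * (⟪w₀, x i⟫_ℝ - t w₀))) ≠ 0) :
    gradient t w₀ = (1 / ∑ i, deriv l (β * (⟪w₀, x i⟫_ℝ - t w₀))) •
      ∑ i, deriv l (β * (⟪w₀, x i⟫_ℝ - t w₀)) • x i := by
  rw [one_div]
  exact gradient_eq_of_sum_comp_eventually_const x l hβ.ne' t w₀ (fun _ => hl _) (ht w₀)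
    (Filter.Eventually.of_forall himp) hD
end
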